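/- arXiv:1705.02194 — 2 statements merged into one kernel-verified Lean document; each statement's English description precedes it below -/
import Mathlib

section
/- Let q > 1, c ≥ 0, Φ_0 > 0, and let S be a finite index set. Suppose for each i ∈ S we have 0 ≤ s_i ≤ t_i and define Δμ_i = c * (t_i^{q-1} - s_i^{q-1}) / ((q-1) * Φ_0^{1 - 1/q}). Let p satisfy 1/p + 1/q = 1 and let Φ_1 = ∑_{i∈S} t_i^q, and assume ∑_{i∈S} s_i^q ≥ Φ_0 and Φ_1 ≤ θ·Φ_0 for some θ > 1. Then (∑_{i∈S} (Δμ_i)^p)^{1/p} ≤ (c/(q-1)) * (θ - 1)^{1/p}. -/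
open Real

lemma aux_add_rpow {a b p : ℝ} (ha : 0 ≤ a) (hb : 0 ≤ b) (hp : 1 ≤ p) :
    a ^ p + b ^ p ≤ (a + b) ^ p := by
  have h := NNReal.add_rpow_le_rpow_add a.toNNReal b.toNNReal hp
  have hcoe : ((a.toNNReal ^ p + b.toNNReal ^ p : NNReal) : ℝ) ≤
      (((a.toNNReal + b.toNNReal) ^ p : NNReal) : ℝ) := by exact_mod_cast h
  rwa [NNReal.coe_add, NNReal.coe_rpow, NNReal.coe_rpow, NNReal.coe_rpow,
    NNReal.coe_add, Real.coe_toNNReal a ha, Real.coe_toNNReal b hb] at hcoe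

/-- Single-phase bound: `‖Δμ‖_p ≤ (c/(q-1)) (θ-1)^{1/p}`. -/
theorem stmt_4 {S : Type*} [Fintype S] (q p c Φ₀ Φ₁ θ : ℝ)
    (hq : 1 < q) (hpq : 1 / p + 1 / q = 1) (hc : 0 ≤ c) (hΦ₀ : 0 < Φ₀) (hθ : 1 < θ)
    (s t : S → ℝ) (hs : ∀ i, 0 ≤ s i) (hst : ∀ i, s i ≤ t i)
    (hΦ₁ : Φ₁ = ∑ i, (t i) ^ q)
    (hlow : Φ₀ ≤ ∑ i, (s i) ^ q) (hup : Φ₁ ≤ θ * Φ₀) :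
    (∑ i, (c * ((t i) ^ (q - 1) - (s i) ^ (q - 1)) /
        ((q - 1) * Φ₀ ^ (1 - 1 / q))) ^ p) ^ (1 / p)
      ≤ (c / (q - 1)) * (θ - 1) ^ (1 / p) := by
  have hq0 : (0:ℝ) < q := by linarith
  have hq1 : (0:ℝ) < q - 1 := by linarith
  have hinvp : 1 / p = 1 - 1 / q := by linarith
  have hinvp_pos : 0 < 1 / p := by
    rw [hinvp]
    have : 1 / q < 1 := by rw [div_lt_one hq0]; linarith
    linarith
  have hp_pos : 0 < p := by
    by_contra h
    push_neg at h
    have : 1 / p ≤ 0 := one_div_nonpos.mpr h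
    linarith
  have hp1 : 1 ≤ p := by
    have h1 : 1 / p ≤ 1 := by
      rw [hinvp]
      have : 0 < 1 / q := by positivity
      linarith
    exact (div_le_one hp_pos).mp h1
  have hqp : (q - 1) * p = q := by
    have h : 1 / p = (q - 1) / q := by rw [hinvp]; field_simp
    have h2 : p = q / (q - 1) := by
      rw [eq_div_iff hq1.ne']
      field_simp at h
      linarith
    rw [h2]; field_simp
  have hpinv : (1 - 1 / q) * p = 1 := by
    rw [← hinvp]; field_simp
  set K : ℝ := c ^ p / ((q - 1) ^ p * Φ₀) with hK
  have hKnn : 0 ≤ K := by positivity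
  have hdenom : (0:ℝ) < (q - 1) * Φ₀ ^ (1 - 1 / q) := by positivity
  -- pointwise bound
  have key : ∀ i, (c * ((t i) ^ (q - 1) - (s i) ^ (q - 1)) /
      ((q - 1) * Φ₀ ^ (1 - 1 / q))) ^ p ≤ K * ((t i) ^ q - (s i) ^ q) := by
    intro i
    have hti : 0 ≤ t i := le_trans (hs i) (hst i)
    have hab : (s i) ^ (q - 1) ≤ (t i) ^ (q - 1) :=
      Real.rpow_le_rpow (hs i) (hst i) hq1.le
    have hannb : 0 ≤ (t i) ^ (q - 1) - (s i) ^ (q - 1) := by linarith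
    have hnum : 0 ≤ c * ((t i) ^ (q - 1) - (s i) ^ (q - 1)) := by positivity
    have hfactor : (c / ((q - 1) * Φ₀ ^ (1 - 1 / q))) ^ p = K := by
      rw [Real.div_rpow hc hdenom.le, Real.mul_rpow hq1.le (by positivity),
        ← Real.rpow_mul hΦ₀.le, hpinv, Real.rpow_one]
    have hpow : ((t i) ^ (q - 1) - (s i) ^ (q - 1)) ^ p ≤ (t i) ^ q - (s i) ^ q := by
      have h := aux_add_rpow hannb (Real.rpow_nonneg (hs i) (q-1)) hp1
      rw [sub_add_cancel] at h
      rw [← Real.rpow_mul hti, ← Real.rpow_mul (hs i), hqp] at h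
      linarith
    calc (c * ((t i) ^ (q - 1) - (s i) ^ (q - 1)) /
        ((q - 1) * Φ₀ ^ (1 - 1 / q))) ^ p
        = (c / ((q - 1) * Φ₀ ^ (1 - 1 / q))) ^ p *
          ((t i) ^ (q - 1) - (s i) ^ (q - 1)) ^ p := by
          rw [← Real.mul_rpow (by positivity) hannb]
          ring_nf
      _ ≤ K * ((t i) ^ q - (s i) ^ q) := by
          rw [hfactor]
          exact mul_le_mul_of_nonneg_left hpow hKnn
  have hsum : (∑ i, (c * ((t i) ^ (q - 1) - (s i) ^ (q - 1)) /
      ((q - 1) * Φ₀ ^ (1 - 1 / q))) ^ p) ≤ (c / (q - 1)) ^ p * (θ - 1) := by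
    calc (∑ i, (c * ((t i) ^ (q - 1) - (s i) ^ (q - 1)) /
        ((q - 1) * Φ₀ ^ (1 - 1 / q))) ^ p)
        ≤ ∑ i, K * ((t i) ^ q - (s i) ^ q) :=
          Finset.sum_le_sum fun i _ => key i
      _ = K * (Φ₁ - ∑ i, (s i) ^ q) := by
          rw [← Finset.mul_sum, Finset.sum_sub_distrib, ← hΦ₁]
      _ ≤ K * ((θ - 1) * Φ₀) := by
          apply mul_le_mul_of_nonneg_left _ hKnn
          nlinarith
      _ = (c / (q - 1)) ^ p * (θ - 1) := by
          rw [hK, Real.div_rpow hc hq1.le]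
          field_simp
  have hsum_nn : 0 ≤ ∑ i, (c * ((t i) ^ (q - 1) - (s i) ^ (q - 1)) /
      ((q - 1) * Φ₀ ^ (1 - 1 / q))) ^ p := by
    apply Finset.sum_nonneg
    intro i _
    apply Real.rpow_nonneg
    have hab : (s i) ^ (q - 1) ≤ (t i) ^ (q - 1) :=
      Real.rpow_le_rpow (hs i) (hst i) hq1.le
    have : 0 ≤ (t i) ^ (q - 1) - (s i) ^ (q - 1) := by linarith
    positivity
  calc (∑ i, (c * ((t i) ^ (q - 1) - (s i) ^ (q - 1)) /
      ((q - 1) * Φ₀ ^ (1 - 1 / q))) ^ p) ^ (1 / p)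
      ≤ ((c / (q - 1)) ^ p * (θ - 1)) ^ (1 / p) :=
        Real.rpow_le_rpow hsum_nn hsum (by positivity)
    _ = (c / (q - 1)) * (θ - 1) ^ (1 / p) := by
        rw [Real.mul_rpow (by positivity) (by linarith),
          ← Real.rpow_mul (by positivity), mul_one_div_cancel hp_pos.ne',
          Real.rpow_one]
end

section
/- For every real q with 1 < q < 2, let p = q/(q-1), ε = -1/log(q-1) (natural log; note 0 < q-1 < 1 so ε > 0), and θ = 1 + (q-1)^{-εp}. Then (θ-1)^{1/p} / log θ ≤ 2/p, and consequently 3q(θ-1)^{1/p} / ((q-1) log θ) ≤ 6. -/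
/-- Choice of `θ` for `1 < q < 2` (base-2 logarithms):
with `ε = 1/(-log₂(q-1))` and `θ = 1 + (q-1)^(-ε p)`, one has
`(θ-1)^{1/p}/log₂ θ ≤ 2/p` and hence `3q(θ-1)^{1/p}/((q-1) log₂ θ) ≤ 6`. -/
theorem stmt_5 (q : ℝ) (hq1 : 1 < q) (hq2 : q < 2) :
    let p : ℝ := q / (q - 1)
    let ε : ℝ := 1 / (-(Real.logb 2 (q - 1)))
    let θ : ℝ := 1 + (q - 1) ^ (-(ε * p))
    (θ - 1) ^ (1 / p) / Real.logb 2 θ ≤ 2 / p ∧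
      3 * q * (θ - 1) ^ (1 / p) / ((q - 1) * Real.logb 2 θ) ≤ 6 := by
  intro p ε θ
  have hq0 : (0:ℝ) < q - 1 := by linarith
  have hq1' : q - 1 < 1 := by linarith
  have hlogneg : Real.log (q - 1) < 0 := Real.log_neg hq0 hq1'
  have hlogne : Real.log (q - 1) ≠ 0 := ne_of_lt hlogneg
  have hlog2 : (0:ℝ) < Real.log 2 := Real.log_pos (by norm_num)
  have hp : 2 < p := by
    show 2 < q / (q - 1)
    rw [lt_div_iff₀ hq0]; linarith
  have hp0 : 0 < p := by linarith
  have key : (q - 1) ^ (-(ε * p)) = (2:ℝ) ^ p := by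
    rw [Real.rpow_def_of_pos hq0, Real.rpow_def_of_pos (by norm_num : (0:ℝ) < 2)]
    congr 1
    show Real.log (q - 1) * -(1 / (-(Real.logb 2 (q - 1))) * p) = Real.log 2 * p
    rw [Real.logb]
    field_simp
  have hθ1 : θ - 1 = (2:ℝ) ^ p := by
    show 1 + (q - 1) ^ (-(ε * p)) - 1 = (2:ℝ) ^ p
    rw [key]; ring
  have hroot : (θ - 1) ^ (1 / p) = 2 := by
    rw [hθ1, ← Real.rpow_mul (by norm_num : (0:ℝ) ≤ 2), mul_one_div_cancel hp0.ne',
      Real.rpow_one]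
  have hlogθ : p ≤ Real.logb 2 θ := by
    have h1 : Real.logb 2 ((2:ℝ) ^ p) = p := Real.logb_rpow (by norm_num) (by norm_num)
    have h2 : (2:ℝ) ^ p ≤ θ := by rw [← hθ1]; linarith
    calc p = Real.logb 2 ((2:ℝ) ^ p) := h1.symm
      _ ≤ Real.logb 2 θ := Real.logb_le_logb_of_le (by norm_num) (by positivity) h2
  have hLpos : 0 < Real.logb 2 θ := lt_of_lt_of_le hp0 hlogθ
  constructor
  · rw [hroot]
    exact div_le_div_of_nonneg_left (by norm_num) hp0 hlogθ |>.trans_eq rfl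
  · rw [hroot, div_le_iff₀ (by positivity)]
    have hqp : (q - 1) * p = q := by
      show (q - 1) * (q / (q - 1)) = q
      field_simp
    nlinarith [mul_le_mul_of_nonneg_left hlogθ hq0.le]
end
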